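/- arXiv:1909.04231 — 2 statements merged into one kernel-verified Lean document; each statement's English description precedes it below -/
import Mathlib

section
/- For every real p with 0 ≤ p < φ, the probability that Player 2 wins the random game of depth n tends to 1: lim_{n→∞} μ_{n,p}({a : V_n(a) = false}) = 1. -/
/-!
Let `x n` be the probability that Player 1 wins the depth-`n` game. The two subtrees are
independent, so `x (n + 1) = x n ^ 2` at Player 2's levels and `1 - x (n + 1) = (1 - x n) ^ 2` at
Player 1's. Two consecutive levels act by `x ↦ x ^ 2 * (2 - x ^ 2)`, whose fixed point in `(0, 1)`
is `φ`, the positive root of `x ^ 2 + x = 1`. For `0 ≤ x ≤ p < φ` this map is bounded by `c * x`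
with `c = p * (2 - p ^ 2)`, and `1 - c = (1 - p) * (1 - p - p ^ 2) > 0`, so `x n` decays
geometrically.
-/

open Filter Topology

noncomputable def phi : ℝ := (Real.sqrt 5 - 1) / 2

/-- `&&` is a move of Player 2 (the minimizer), `||` one of Player 1. -/
def gameValue : (n : ℕ) → (Fin (2 ^ n) → Bool) → Bool
  | 0, a => a 0
  | n + 1, a =>
      have h : 2 ^ (n + 1) = 2 ^ n + 2 ^ n := by rw [pow_succ]; omega
      let aL : Fin (2 ^ n) → Bool := fun i => a ⟨i.1, by have := i.2; omega⟩
      let aR : Fin (2 ^ n) → Bool := fun i => a ⟨i.1 + 2 ^ n, by have := i.2; omega⟩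
      if (n + 1) % 2 = 1 then gameValue n aL && gameValue n aR
      else gameValue n aL || gameValue n aR

noncomputable def prob (n : ℕ) (p : ℝ) (S : Set (Fin (2 ^ n) → Bool)) : ℝ :=
  ∑ a : Fin (2 ^ n) → Bool, S.indicator (fun a => ∏ i, if a i then p else 1 - p) a

section Bernoulli

variable {ι κ : Type*} [Fintype ι] [Fintype κ] (p : ℝ)

noncomputable def bernoulliWeight (a : ι → Bool) : ℝ := ∏ i, if a i then p else 1 - p

theorem bernoulliWeight_comp_equiv (e : κ ≃ ι) (a : ι → Bool) :
    bernoulliWeight p (a ∘ e) = bernoulliWeight p a :=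
  e.prod_comp fun i => if a i then p else 1 - p

theorem bernoulliWeight_sum (a : ι ⊕ κ → Bool) :
    bernoulliWeight p a = bernoulliWeight p (a ∘ Sum.inl) * bernoulliWeight p (a ∘ Sum.inr) :=
  Fintype.prod_sum_type _

variable [DecidableEq ι] [DecidableEq κ]

theorem sum_bernoulliWeight : ∑ a : ι → Bool, bernoulliWeight p a = 1 := by
  simp [bernoulliWeight, ← Fintype.prod_sum (fun _ (b : Bool) => if b then p else 1 - p)]

/-- `prob n p` is `bernoulliProb p` on `Fin (2 ^ n) → Bool`, definitionally. -/
noncomputable def bernoulliProb (S : Set (ι → Bool)) : ℝ :=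
  ∑ a, S.indicator (bernoulliWeight p) a

theorem bernoulliProb_compl (S : Set (ι → Bool)) :
    bernoulliProb p Sᶜ = 1 - bernoulliProb p S := by
  simp only [bernoulliProb, Set.indicator_compl, Pi.sub_apply, Finset.sum_sub_distrib,
    sum_bernoulliWeight]

theorem bernoulliProb_preimage_comp_equiv (e : κ ≃ ι) (S : Set (κ → Bool)) :
    bernoulliProb p ((· ∘ e) ⁻¹' S) = bernoulliProb p S := by
  rw [bernoulliProb, bernoulliProb, ← (e.arrowCongr (Equiv.refl Bool)).sum_comp]
  refine Fintype.sum_congr _ _ fun a => ?_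
  have h : (e.arrowCongr (Equiv.refl Bool)) a = a ∘ e.symm := rfl
  classical
  rw [h, Set.indicator_apply, Set.indicator_apply, Set.mem_preimage, Function.comp_assoc,
    e.symm_comp_self, Function.comp_id, bernoulliWeight_comp_equiv]

theorem bernoulliProb_sum_prod (S : Set (ι → Bool)) (T : Set (κ → Bool)) :
    bernoulliProb p {a : ι ⊕ κ → Bool | a ∘ Sum.inl ∈ S ∧ a ∘ Sum.inr ∈ T} =
      bernoulliProb p S * bernoulliProb p T := by
  rw [bernoulliProb, bernoulliProb, bernoulliProb, Finset.sum_mul_sum, ← Fintype.sum_prod_type',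
    ← (Equiv.sumArrowEquivProdArrow ι κ Bool).sum_comp]
  refine Fintype.sum_congr _ _ fun a => ?_
  change _ = S.indicator _ (a ∘ Sum.inl) * T.indicator _ (a ∘ Sum.inr)
  classical
  simp only [Set.indicator_apply, Set.mem_ofPred_eq, bernoulliWeight_sum p a]
  split_ifs <;> simp_all

end Bernoulli

def subtreeEquiv (n : ℕ) : Fin (2 ^ n) ⊕ Fin (2 ^ n) ≃ Fin (2 ^ (n + 1)) :=
  finSumFinEquiv.trans (finCongr (by rw [pow_succ, mul_two]))

theorem gameValue_succ (n : ℕ) (a : Fin (2 ^ (n + 1)) → Bool) :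
    gameValue (n + 1) a =
      if (n + 1) % 2 = 1 then
        gameValue n (a ∘ subtreeEquiv n ∘ Sum.inl) && gameValue n (a ∘ subtreeEquiv n ∘ Sum.inr)
      else
        gameValue n (a ∘ subtreeEquiv n ∘ Sum.inl) ||
          gameValue n (a ∘ subtreeEquiv n ∘ Sum.inr) := by
  have hR : a ∘ subtreeEquiv n ∘ Sum.inr = fun i => a ⟨i.1 + 2 ^ n, by omega⟩ := by
    funext i
    exact congrArg a (Fin.ext (add_comm _ _))
  rw [gameValue, hR]
  rfl

theorem prob_subtrees (n : ℕ) (p : ℝ) (S T : Set (Fin (2 ^ n) → Bool)) :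
    prob (n + 1) p {a | a ∘ subtreeEquiv n ∘ Sum.inl ∈ S ∧ a ∘ subtreeEquiv n ∘ Sum.inr ∈ T} =
      prob n p S * prob n p T :=
  (bernoulliProb_preimage_comp_equiv p (subtreeEquiv n) _).trans (bernoulliProb_sum_prod p S T)

theorem prob_gameValue_zero (p : ℝ) : prob 0 p {a | gameValue 0 a = true} = p := by
  change ∑ a : Fin 1 → Bool, _ = p
  rw [← (Equiv.funUnique (Fin 1) Bool).symm.sum_comp]
  simp [gameValue, Set.indicator_apply]

theorem prob_gameValue_false (n : ℕ) (p : ℝ) :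
    prob n p {a | gameValue n a = false} = 1 - prob n p {a | gameValue n a = true} := by
  have h : {a | gameValue n a = false} = {a | gameValue n a = true}ᶜ := by
    ext a
    simp
  rw [h]
  exact bernoulliProb_compl p _

theorem prob_gameValue_succ_true {n : ℕ} (hn : (n + 1) % 2 = 1) (p : ℝ) :
    prob (n + 1) p {a | gameValue (n + 1) a = true} = prob n p {a | gameValue n a = true} ^ 2 := by
  rw [sq, ← prob_subtrees]
  congr
  ext a
  simp [gameValue_succ, hn]

theorem prob_gameValue_succ_false {n : ℕ} (hn : (n + 1) % 2 = 0) (p : ℝ) :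
    prob (n + 1) p {a | gameValue (n + 1) a = false} =
      prob n p {a | gameValue n a = false} ^ 2 := by
  rw [sq, ← prob_subtrees]
  congr
  ext a
  simp [gameValue_succ, hn]

theorem phi_sq_add_phi : phi ^ 2 + phi = 1 := by
  have h5 : Real.sqrt 5 ^ 2 = 5 := Real.sq_sqrt (by norm_num)
  unfold phi
  linear_combination h5 / 4

theorem sq_add_self_lt_one_of_lt_phi {p : ℝ} (hp0 : 0 ≤ p) (hp : p < phi) : p ^ 2 + p < 1 := by
  nlinarith [phi_sq_add_phi]

section GoldenRecursion

variable {p : ℝ}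

theorem mul_two_sub_sq_lt_one (hp : p ^ 2 + p < 1) : p * (2 - p ^ 2) < 1 := by
  have h : 1 - p * (2 - p ^ 2) = (1 - p) * (1 - p - p ^ 2) := by ring
  nlinarith [mul_pos (show 0 < 1 - p by nlinarith) (show 0 < 1 - p - p ^ 2 by linarith)]

theorem sq_mul_two_sub_sq_le {x : ℝ} (hx : 0 ≤ x) (hxp : x ≤ p) (hp : p ^ 2 + p < 1) :
    x ^ 2 * (2 - x ^ 2) ≤ p * (2 - p ^ 2) * x := by
  have h : p * (2 - p ^ 2) - x * (2 - x ^ 2) = (p - x) * (2 - p ^ 2 - p * x - x ^ 2) := by ring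
  have hmono : x * (2 - x ^ 2) ≤ p * (2 - p ^ 2) := by
    nlinarith [mul_nonneg (sub_nonneg.2 hxp) (show 0 ≤ 2 - p ^ 2 - p * x - x ^ 2 by nlinarith)]
  nlinarith [mul_le_mul_of_nonneg_left hmono hx]

theorem orbit_bounds_of_sq_mul_two_sub_sq (hp0 : 0 ≤ p) (hp : p ^ 2 + p < 1) {y : ℕ → ℝ}
    (h0 : 0 ≤ y 0) (h0p : y 0 ≤ p) (hstep : ∀ k, y (k + 1) = y k ^ 2 * (2 - y k ^ 2)) (k : ℕ) :
    0 ≤ y k ∧ y k ≤ p * (p * (2 - p ^ 2)) ^ k := by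
  set c := p * (2 - p ^ 2)
  have hc0 : 0 ≤ c := mul_nonneg hp0 (by nlinarith)
  induction k with
  | zero => simpa using ⟨h0, h0p⟩
  | succ k ih =>
    obtain ⟨hy0, hyc⟩ := ih
    have hyp : y k ≤ p :=
      hyc.trans (mul_le_of_le_one_right hp0 (pow_le_one₀ hc0 (mul_two_sub_sq_lt_one hp).le))
    rw [hstep]
    constructor
    · exact mul_nonneg (sq_nonneg _) (by nlinarith)
    · calc y k ^ 2 * (2 - y k ^ 2) ≤ c * y k := sq_mul_two_sub_sq_le hy0 hyp hp
        _ ≤ c * (p * c ^ k) := by gcongr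
        _ = p * c ^ (k + 1) := by ring

theorem tendsto_zero_of_sq_of_one_sub_sq (hp0 : 0 ≤ p) (hp : p ^ 2 + p < 1) {x : ℕ → ℝ}
    (h0 : 0 ≤ x 0) (h0p : x 0 ≤ p) (hodd : ∀ k, x (2 * k + 1) = x (2 * k) ^ 2)
    (heven : ∀ k, x (2 * k + 2) = 1 - (1 - x (2 * k + 1)) ^ 2) :
    Tendsto x atTop (𝓝 0) := by
  set c := p * (2 - p ^ 2)
  have hc0 : 0 ≤ c := mul_nonneg hp0 (by nlinarith)
  have hc1 : c < 1 := mul_two_sub_sq_lt_one hp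
  have heven_bound (k : ℕ) : 0 ≤ x (2 * k) ∧ x (2 * k) ≤ p * c ^ k :=
    orbit_bounds_of_sq_mul_two_sub_sq hp0 hp (y := fun k => x (2 * k)) h0 h0p
      (fun k => by rw [mul_add_one, heven, hodd]; ring) k
  have hbound (n : ℕ) : 0 ≤ x n ∧ x n ≤ p * c ^ (n / 2) := by
    obtain ⟨k, rfl | rfl⟩ := Nat.even_or_odd' n
    · simpa using heven_bound k
    · obtain ⟨hx0, hxc⟩ := heven_bound k
      have hx1 : x (2 * k) ≤ 1 := by nlinarith [pow_le_one₀ (n := k) hc0 hc1.le]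
      rw [hodd, show (2 * k + 1) / 2 = k by omega]
      exact ⟨sq_nonneg _, le_trans (by nlinarith) hxc⟩
  have hgeo : Tendsto (fun n => p * c ^ (n / 2)) atTop (𝓝 0) := by
    simpa using ((tendsto_pow_atTop_nhds_zero_of_lt_one hc0 hc1).comp
      (Nat.tendsto_div_const_atTop two_ne_zero)).const_mul p
  exact squeeze_zero (fun n => (hbound n).1) (fun n => (hbound n).2) hgeo

end GoldenRecursion

/-- For every `p` with `0 ≤ p < φ`, the probability that Player 2 wins the depth-`n`
random game tends to `1` as `n → ∞`. -/
theorem player_two_wins_asymptotically (p : ℝ) (hp : 0 ≤ p) (hp' : p < phi) :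
    Tendsto (fun n => prob n p {a | gameValue n a = false}) atTop (𝓝 1) := by
  have hwin : Tendsto (fun n => prob n p {a | gameValue n a = true}) atTop (𝓝 0) := by
    refine tendsto_zero_of_sq_of_one_sub_sq hp (sq_add_self_lt_one_of_lt_phi hp hp')
      (by rwa [prob_gameValue_zero]) (prob_gameValue_zero p).le
      (fun k => prob_gameValue_succ_true (by omega) p) (fun k => ?_)
    rw [← prob_gameValue_false, ← prob_gameValue_succ_false (by omega), prob_gameValue_false,
      sub_sub_cancel]
  simpa [prob_gameValue_false] using (tendsto_const_nhds (x := (1 : ℝ))).sub hwin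
end

section
/- The asymptotic probability of 1-fragility of a golden game exists and satisfies lim_{n→∞} F_n(1) = 1 − φ·ξ − φ²·ξ², where ξ is the unique root in the open interval (0,1) of the equation x = φ³ + 2φ²x² (the smaller root of the quadratic φ³ − x + 2φ²x²). -/
open Filter Topology

/-- A game `a` of depth `n` is `d`-fragile if there is a game `a'` at Hamming distance at most
`d` from `a` whose value differs from that of `a`. -/
def Fragile (n d : ℕ) (a : Fin (2 ^ n) → Bool) : Prop :=
  ∃ a' : Fin (2 ^ n) → Bool, hammingDist a a' ≤ d ∧ gameValue n a' ≠ gameValue n a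

/-- `F_n(d,p)`: the probability that a depth-`n` random game with parameter `p` is `d`-fragile. -/
noncomputable def fragProb (n d : ℕ) (p : ℝ) : ℝ := prob n p {a | Fragile n d a}

/-! A game is 1-fragile iff it has a pivotal coordinate. Whether a coordinate of the left half
is pivotal for the glued game depends only on its being pivotal for the left subgame and on the
values of the two subgames, so the law of the pair (value, 1-fragility) obeys a closed quadratic
recursion from depth `n` to depth `n + 1`. At `p = φ` the probability of value `true` alternates
between `φ` and `φ²`, and the probabilities `r_n`, `u_n` of being robust with value `true`,
resp. `false`, are transformed alternately by `x ↦ x²` and `x ↦ 2φx + φ⁴`. Over two levels these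
are contractions (by `2φ³ < 1/2`) towards `φ²/2` and `φ⁴/4`, so
`F_n(1) = 1 - r_n - u_n → 1 - φ²/2 - φ⁴/4`, which is `1 - φξ - φ²ξ²` for `ξ = φ/2`. -/

open Function

lemma phi_eq_neg_goldenConj : phi = -Real.goldenConj := by
  rw [phi, Real.goldenConj]; ring

lemma phi_sq : phi ^ 2 = 1 - phi := by
  rw [phi_eq_neg_goldenConj]; linear_combination Real.goldenConj_sq

lemma phi_pos : 0 < phi := by
  rw [phi_eq_neg_goldenConj]; linarith [Real.goldenConj_neg]

lemma phi_lt_one : phi < 1 := by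
  rw [phi_eq_neg_goldenConj]; linarith [Real.neg_one_lt_goldenConj]

lemma two_mul_phi_pow_three_le : 2 * phi ^ 3 ≤ 1 / 2 := by
  nlinarith [phi_sq, phi_pos]

lemma phi_sq_div_two_fixed_point : 2 * phi * (phi ^ 2 / 2) ^ 2 + phi ^ 4 = phi ^ 2 / 2 := by
  linear_combination (phi ^ 3 / 2 + phi ^ 2 / 2) * phi_sq

lemma phi_div_two_eq : phi / 2 = phi ^ 3 + 2 * phi ^ 2 * (phi / 2) ^ 2 := by
  linear_combination (-phi ^ 2 / 2 - phi / 2) * phi_sq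

lemma eq_phi_div_two_of_lt_one {y : ℝ} (hy₁ : y < 1) (hy : y = phi ^ 3 + 2 * phi ^ 2 * y ^ 2) :
    y = phi / 2 := by
  have hfactor : 2 * phi ^ 2 * (y - 1) * (y - phi / 2) = 0 := by
    linear_combination (-1 : ℝ) * hy + (-(phi + 1) * y) * phi_sq
  rcases mul_eq_zero.mp hfactor with h | h
  · rcases mul_eq_zero.mp h with h | h
    · exact absurd h (by positivity [phi_pos.ne'])
    · linarith
  · linarith

section Hamming

variable {ι β : Type*} [Fintype ι] [DecidableEq ι] [DecidableEq β]

lemma eq_update_of_hammingDist_le_one {x y : ι → β} {i : ι} (h : hammingDist x y ≤ 1)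
    (hi : x i ≠ y i) : y = update x i (y i) := by
  funext j
  by_cases hj : j = i
  · subst hj; simp
  · rw [update_of_ne hj]
    by_contra hne
    exact hj (Finset.card_le_one.mp h j (by simp [Ne.symm hne]) i (by simpa using hi))

lemma hammingDist_update_le_one (x : ι → β) (i : ι) (b : β) :
    hammingDist x (update x i b) ≤ 1 :=
  have h : ∀ j, x j ≠ update x i b j → j = i := fun j hj => by
    by_contra hji
    exact hj (update_of_ne hji b x).symm
  Finset.card_le_one.mpr fun j hj k hk => by
    simp only [Finset.mem_filter, Finset.mem_univ, true_and] at hj hk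
    exact (h j hj).trans (h k hk).symm

end Hamming

def halvesEquiv (n : ℕ) : Fin (2 ^ n) ⊕ Fin (2 ^ n) ≃ Fin (2 ^ (n + 1)) :=
  finSumFinEquiv.trans (finCongr (Nat.two_pow_succ n).symm)

def nodeOp (m : ℕ) (u v : Bool) : Bool := if m % 2 = 1 then u && v else u || v

section Glue

variable {n : ℕ} (x y : Fin (2 ^ n) → Bool)

def glue : Fin (2 ^ (n + 1)) → Bool := Sum.elim x y ∘ (halvesEquiv n).symm

@[simp] lemma glue_inl (j : Fin (2 ^ n)) : glue x y (halvesEquiv n (.inl j)) = x j := by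
  simp [glue]

@[simp] lemma glue_inr (j : Fin (2 ^ n)) : glue x y (halvesEquiv n (.inr j)) = y j := by
  simp [glue]

lemma update_glue_inl (j : Fin (2 ^ n)) (b : Bool) :
    update (glue x y) (halvesEquiv n (.inl j)) b = glue (update x j b) y := by
  rw [glue, glue, ← Sum.update_elim_inl, update_comp_equiv, Equiv.symm_symm]

lemma update_glue_inr (j : Fin (2 ^ n)) (b : Bool) :
    update (glue x y) (halvesEquiv n (.inr j)) b = glue x (update y j b) := by
  rw [glue, glue, ← Sum.update_elim_inr, update_comp_equiv, Equiv.symm_symm]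

lemma gameValue_glue :
    gameValue (n + 1) (glue x y) = nodeOp (n + 1) (gameValue n x) (gameValue n y) := by
  have hx : (fun i : Fin (2 ^ n) => glue x y ⟨i, by omega⟩) = x := funext (glue_inl x y)
  have hy : (fun i : Fin (2 ^ n) => glue x y ⟨i + 2 ^ n, by omega⟩) = y :=
    funext fun i => (congrArg (glue x y) (Fin.ext (by simp [halvesEquiv]))).trans (glue_inr x y i)
  rw [gameValue]
  simp only [hx, hy, nodeOp]

end Glue

def glueEquiv (n : ℕ) :
    (Fin (2 ^ n) → Bool) × (Fin (2 ^ n) → Bool) ≃ (Fin (2 ^ (n + 1)) → Bool) :=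
  (Equiv.sumArrowEquivProdArrow _ _ _).symm.trans ((halvesEquiv n).arrowCongr (Equiv.refl Bool))

lemma sum_glue {n : ℕ} {M : Type*} [AddCommMonoid M] (f : (Fin (2 ^ (n + 1)) → Bool) → M) :
    ∑ a, f a = ∑ x, ∑ y, f (glue x y) := by
  rw [← (glueEquiv n).sum_comp, Fintype.sum_prod_type]
  rfl

def weight {ι : Type*} [Fintype ι] (p : ℝ) (a : ι → Bool) : ℝ := ∏ i, if a i then p else 1 - p

section Weight

variable {ι κ : Type*} [Fintype ι] [Fintype κ] (p : ℝ)

lemma sum_weight [DecidableEq ι] : ∑ a : ι → Bool, weight p a = 1 :=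
  calc ∑ a : ι → Bool, weight p a = ∏ _i : ι, ∑ b : Bool, if b then p else 1 - p :=
        (Fintype.prod_sum (κ := fun _ => Bool) fun _ b => if b then p else 1 - p).symm
    _ = 1 := by simp

lemma weight_comp_equiv (a : ι → Bool) (e : κ ≃ ι) : weight p (a ∘ e) = weight p a :=
  e.prod_comp fun i => if a i then p else 1 - p

lemma weight_sumElim (x : ι → Bool) (y : κ → Bool) :
    weight p (Sum.elim x y) = weight p x * weight p y :=
  Fintype.prod_sum_type _

lemma weight_glue {n : ℕ} (x y : Fin (2 ^ n) → Bool) :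
    weight p (glue x y) = weight p x * weight p y := by
  rw [glue, weight_comp_equiv, weight_sumElim]

end Weight

section Prob

variable {n : ℕ} (p : ℝ) {β : Type*}

lemma prob_fiber (T : (Fin (2 ^ n) → Bool) → β) (s : β) [DecidablePred (T · = s)] :
    prob n p {a | T a = s} = ∑ a, if T a = s then weight p a else 0 := by
  simp only [prob, Set.indicator_apply, Set.mem_ofPred_eq, weight]

variable [Fintype β] [DecidableEq β]

lemma sum_prob_fiber_mul (T : (Fin (2 ^ n) → Bool) → β) (g : β → ℝ) :
    ∑ s, prob n p {a | T a = s} * g s = ∑ a, weight p a * g (T a) := by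
  simp only [prob_fiber, Finset.sum_mul, ite_mul, zero_mul]
  rw [Finset.sum_comm]
  simp

lemma prob_succ_fiber (T : (Fin (2 ^ (n + 1)) → Bool) → β) (T' : (Fin (2 ^ n) → Bool) → β)
    (comb : β → β → β) (hT : ∀ x y, T (glue x y) = comb (T' x) (T' y)) (s : β) :
    prob (n + 1) p {a | T a = s} = ∑ s₁, ∑ s₂,
      if comb s₁ s₂ = s then prob n p {a | T' a = s₁} * prob n p {a | T' a = s₂} else 0 :=
  calc prob (n + 1) p {a | T a = s}
      = ∑ x, weight p x * ∑ y, weight p y * if comb (T' x) (T' y) = s then 1 else 0 := by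
        simp only [prob_fiber, sum_glue, hT, weight_glue, Finset.mul_sum, mul_ite, mul_one,
          mul_zero]
    _ = ∑ s₁, prob n p {a | T' a = s₁} *
          ∑ s₂, prob n p {a | T' a = s₂} * if comb s₁ s₂ = s then 1 else 0 := by
        simp only [sum_prob_fiber_mul]
    _ = _ := by simp only [Finset.mul_sum, mul_ite, mul_one, mul_zero]

end Prob

lemma fragile_one_iff {n : ℕ} (a : Fin (2 ^ n) → Bool) :
    Fragile n 1 a ↔ ∃ i b, gameValue n (update a i b) ≠ gameValue n a := by
  constructor
  · rintro ⟨a', hd, hv⟩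
    obtain ⟨i, hi⟩ : ∃ i, a i ≠ a' i := by
      by_contra! h
      exact hv (by rw [funext h])
    exact ⟨i, a' i, by rwa [← eq_update_of_hammingDist_le_one hd hi]⟩
  · rintro ⟨i, b, h⟩
    exact ⟨_, hammingDist_update_le_one a i b, h⟩

lemma fragile_zero (a : Fin (2 ^ 0) → Bool) : Fragile 0 1 a :=
  (fragile_one_iff a).mpr ⟨0, !a 0, by simp [gameValue]⟩

lemma Bool.apply_ne_apply_iff (f : Bool → Bool) (u v : Bool) :
    f u ≠ f v ↔ u ≠ v ∧ f (!v) ≠ f v := by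
  cases u <;> cases v <;> simp

lemma fragile_one_glue {n : ℕ} (x y : Fin (2 ^ n) → Bool) :
    Fragile (n + 1) 1 (glue x y) ↔
      (Fragile n 1 x ∧ nodeOp (n + 1) (!gameValue n x) (gameValue n y) ≠
          nodeOp (n + 1) (gameValue n x) (gameValue n y)) ∨
      (Fragile n 1 y ∧ nodeOp (n + 1) (gameValue n x) (!gameValue n y) ≠
          nodeOp (n + 1) (gameValue n x) (gameValue n y)) := by
  simp only [fragile_one_iff, (halvesEquiv n).symm.exists_congr_left, Equiv.symm_symm, Sum.exists,
    update_glue_inl, update_glue_inr, gameValue_glue]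
  refine or_congr ?_ ?_ <;> simp only [← exists_and_right]
  · exact exists₂_congr fun _ _ => Bool.apply_ne_apply_iff (nodeOp (n + 1) · (gameValue n y)) _ _
  · exact exists₂_congr fun _ _ => Bool.apply_ne_apply_iff (nodeOp (n + 1) (gameValue n x)) _ _

open scoped Classical in
noncomputable def profile (n : ℕ) (a : Fin (2 ^ n) → Bool) : Bool × Bool :=
  (gameValue n a, decide (Fragile n 1 a))

def combineProfiles (m : ℕ) : Bool × Bool → Bool × Bool → Bool × Bool
  | (u, f), (v, g) => (nodeOp m u v,
      f && (nodeOp m (!u) v != nodeOp m u v) || g && (nodeOp m u (!v) != nodeOp m u v))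

lemma profile_glue {n : ℕ} (x y : Fin (2 ^ n) → Bool) :
    profile (n + 1) (glue x y) = combineProfiles (n + 1) (profile n x) (profile n y) := by
  simp only [profile, combineProfiles, gameValue_glue, Prod.mk.injEq, true_and]
  rw [Bool.eq_iff_iff]
  simp [fragile_one_glue]

noncomputable def profileLaw (n : ℕ) (p : ℝ) (s : Bool × Bool) : ℝ :=
  prob n p {a | profile n a = s}

section ProfileLaw

variable {n : ℕ} (p : ℝ)

lemma profileLaw_succ (s : Bool × Bool) :
    profileLaw (n + 1) p s = ∑ s₁, ∑ s₂,
      if combineProfiles (n + 1) s₁ s₂ = s then profileLaw n p s₁ * profileLaw n p s₂ else 0 :=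
  prob_succ_fiber p _ _ _ profile_glue s

lemma sum_profileLaw :
    profileLaw n p (true, true) + profileLaw n p (true, false) + profileLaw n p (false, true) +
      profileLaw n p (false, false) = 1 := by
  have h := sum_prob_fiber_mul p (profile n) fun _ => 1
  simp only [mul_one, sum_weight, Fintype.sum_prod_type, Fintype.sum_bool] at h
  rw [profileLaw, profileLaw, profileLaw, profileLaw]
  linarith

lemma profileLaw_zero_robust (v : Bool) : profileLaw 0 p (v, false) = 0 := by
  simp [profileLaw, prob, profile, fragile_zero]

lemma profileLaw_zero_fragile (v : Bool) :
    profileLaw 0 p (v, true) = if v then p else 1 - p := by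
  have : Unique (Fin (2 ^ 0)) := inferInstanceAs (Unique (Fin 1))
  simp only [profileLaw, prob_fiber, profile, fragile_zero, weight, decide_true, Prod.mk.injEq,
    and_true, gameValue]
  rw [← (Equiv.funUnique (Fin (2 ^ 0)) Bool).symm.sum_comp]
  cases v <;> simp

lemma fragProb_one_eq :
    fragProb n 1 p = 1 - profileLaw n p (true, false) - profileLaw n p (false, false) :=
  calc fragProb n 1 p = ∑ a, weight p a * if (profile n a).2 then 1 else 0 := by
        refine Finset.sum_congr rfl fun a _ => ?_
        by_cases h : Fragile n 1 a <;> simp [h, profile, weight]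
    _ = profileLaw n p (true, true) + profileLaw n p (false, true) := by
        rw [← sum_prob_fiber_mul p (profile n) fun s => if s.2 then 1 else 0]
        simp [Fintype.sum_prod_type, profileLaw]
    _ = _ := by linarith [sum_profileLaw (n := n) p]

variable {p}

lemma profileLaw_succ_of_even (hn : n % 2 = 0) :
    profileLaw (n + 1) p (true, false) = profileLaw n p (true, false) ^ 2 ∧
    profileLaw (n + 1) p (false, false) =
      2 * (profileLaw n p (true, true) + profileLaw n p (true, false)) *
        profileLaw n p (false, false) +
      (profileLaw n p (false, true) + profileLaw n p (false, false)) ^ 2 ∧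
    profileLaw (n + 1) p (true, true) + profileLaw (n + 1) p (true, false) =
      (profileLaw n p (true, true) + profileLaw n p (true, false)) ^ 2 := by
  have hm : (n + 1) % 2 = 1 := by omega
  simp only [profileLaw_succ, Fintype.sum_prod_type, Fintype.sum_bool, combineProfiles, nodeOp, hm]
  norm_num
  exact ⟨by ring, by ring, by ring⟩

lemma profileLaw_succ_of_odd (hn : n % 2 = 1) :
    profileLaw (n + 1) p (true, false) =
      2 * (profileLaw n p (false, true) + profileLaw n p (false, false)) *
        profileLaw n p (true, false) +
      (profileLaw n p (true, true) + profileLaw n p (true, false)) ^ 2 ∧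
    profileLaw (n + 1) p (false, false) = profileLaw n p (false, false) ^ 2 ∧
    profileLaw (n + 1) p (false, true) + profileLaw (n + 1) p (false, false) =
      (profileLaw n p (false, true) + profileLaw n p (false, false)) ^ 2 := by
  have hm : (n + 1) % 2 = 0 := by omega
  simp only [profileLaw_succ, Fintype.sum_prod_type, Fintype.sum_bool, combineProfiles, nodeOp, hm]
  norm_num
  exact ⟨by ring, by ring, by ring⟩

end ProfileLaw

section GoldenProfileLaw

variable {n : ℕ}

lemma profileLaw_value_true_phi (n : ℕ) :
    profileLaw n phi (true, true) + profileLaw n phi (true, false) =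
      if n % 2 = 0 then phi else phi ^ 2 := by
  induction n with
  | zero => simp [profileLaw_zero_fragile, profileLaw_zero_robust]
  | succ n ih =>
    rcases Nat.mod_two_eq_zero_or_one n with hn | hn
    · obtain ⟨-, -, h⟩ := profileLaw_succ_of_even (p := phi) hn
      rw [h, ih, if_pos hn, if_neg (by omega)]
    · obtain ⟨-, -, h⟩ := profileLaw_succ_of_odd (p := phi) hn
      rw [if_neg (by omega)] at ih
      rw [if_pos (by omega)]
      have hf : profileLaw n phi (false, true) + profileLaw n phi (false, false) = phi := by
        linarith [sum_profileLaw (n := n) phi, phi_sq]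
      rw [hf] at h
      linarith [sum_profileLaw (n := n + 1) phi, phi_sq]

lemma profileLaw_robust_succ_of_even_phi (hn : n % 2 = 0) :
    profileLaw (n + 1) phi (true, false) = profileLaw n phi (true, false) ^ 2 ∧
    profileLaw (n + 1) phi (false, false) =
      2 * phi * profileLaw n phi (false, false) + phi ^ 4 := by
  obtain ⟨htf, hff, -⟩ := profileLaw_succ_of_even (p := phi) hn
  have ht := profileLaw_value_true_phi n
  rw [if_pos hn] at ht
  have hf : profileLaw n phi (false, true) + profileLaw n phi (false, false) = phi ^ 2 := by
    linarith [sum_profileLaw (n := n) phi, phi_sq]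
  refine ⟨htf, ?_⟩
  rw [hff, ht, hf]
  ring

lemma profileLaw_robust_succ_of_odd_phi (hn : n % 2 = 1) :
    profileLaw (n + 1) phi (true, false) = 2 * phi * profileLaw n phi (true, false) + phi ^ 4 ∧
    profileLaw (n + 1) phi (false, false) = profileLaw n phi (false, false) ^ 2 := by
  obtain ⟨htf, hff, -⟩ := profileLaw_succ_of_odd (p := phi) hn
  have ht := profileLaw_value_true_phi n
  rw [if_neg (by omega)] at ht
  have hf : profileLaw n phi (false, true) + profileLaw n phi (false, false) = phi := by
    linarith [sum_profileLaw (n := n) phi, phi_sq]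
  refine ⟨?_, hff⟩
  rw [htf, ht, hf]
  ring

end GoldenProfileLaw

lemma tendsto_of_mapsTo_of_dist_le {α : Type*} [PseudoMetricSpace α] {f : α → α} {s : Set α}
    {c : α} {q : ℝ} (hq₀ : 0 ≤ q) (hq : q < 1) (hf : Set.MapsTo f s s)
    (hfc : ∀ y ∈ s, dist (f y) c ≤ q * dist y c) {x : ℕ → α} (hx₀ : x 0 ∈ s)
    (hx : ∀ k, x (k + 1) = f (x k)) : Tendsto x atTop (𝓝 c) := by
  have hmem : ∀ k, x k ∈ s := fun k => by
    induction k with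
    | zero => exact hx₀
    | succ k ih => exact hx k ▸ hf ih
  have hdist : ∀ k, dist (x k) c ≤ dist (x 0) c * q ^ k := fun k => by
    induction k with
    | zero => simp
    | succ k ih =>
      calc dist (x (k + 1)) c ≤ q * dist (x k) c := hx k ▸ hfc _ (hmem k)
        _ ≤ q * (dist (x 0) c * q ^ k) := by gcongr
        _ = dist (x 0) c * q ^ (k + 1) := by ring
  rw [tendsto_iff_dist_tendsto_zero]
  refine squeeze_zero (fun _ => dist_nonneg) hdist ?_
  simpa using (tendsto_pow_atTop_nhds_zero_of_lt_one hq₀ hq).const_mul (dist (x 0) c)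

lemma tendsto_of_tendsto_even_of_tendsto_odd {α : Type*} {l : Filter α} {u : ℕ → α}
    (he : Tendsto (fun k => u (2 * k)) atTop l) (ho : Tendsto (fun k => u (2 * k + 1)) atTop l) :
    Tendsto u atTop l := by
  intro s hs
  obtain ⟨N, hN⟩ := mem_atTop_sets.mp (he hs)
  obtain ⟨M, hM⟩ := mem_atTop_sets.mp (ho hs)
  refine mem_atTop_sets.mpr ⟨2 * (N + M), fun n hn => ?_⟩
  obtain ⟨k, rfl | rfl⟩ := Nat.even_or_odd' n
  · exact hN k (by omega)
  · exact hM k (by omega)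

lemma tendsto_profileLaw_two_mul_true_robust :
    Tendsto (fun k => profileLaw (2 * k) phi (true, false)) atTop (𝓝 (phi ^ 2 / 2)) := by
  have hφ := phi_pos
  refine tendsto_of_mapsTo_of_dist_le (f := fun y => 2 * phi * y ^ 2 + phi ^ 4)
    (s := Set.Icc 0 (phi ^ 2 / 2)) (by norm_num) (by norm_num : (1 / 2 : ℝ) < 1) ?_ ?_
    (by simp [profileLaw_zero_robust]; positivity) fun k => ?_
  · rintro y ⟨hy₀, hy₁⟩
    have hsq := pow_le_pow_left₀ hy₀ hy₁ 2
    exact ⟨by positivity, by nlinarith [phi_sq_div_two_fixed_point]⟩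
  · rintro y ⟨hy₀, hy₁⟩
    have hgap : 0 ≤ phi ^ 2 / 2 - y := sub_nonneg.2 hy₁
    have key : phi ^ 2 / 2 - (2 * phi * y ^ 2 + phi ^ 4) =
        2 * phi * (phi ^ 2 / 2 - y) * (phi ^ 2 / 2 + y) := by
      linear_combination (-1 : ℝ) * phi_sq_div_two_fixed_point
    rw [Real.dist_eq, Real.dist_eq, abs_sub_comm, key, abs_sub_comm, abs_of_nonneg hgap,
      abs_of_nonneg (mul_nonneg (mul_nonneg (by positivity) hgap) (by positivity))]
    nlinarith [two_mul_phi_pow_three_le, mul_nonneg hφ.le hgap]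
  · rw [show 2 * (k + 1) = 2 * k + 1 + 1 by ring,
      (profileLaw_robust_succ_of_odd_phi (by omega)).1,
      (profileLaw_robust_succ_of_even_phi (by omega)).1]

lemma tendsto_profileLaw_two_mul_false_robust :
    Tendsto (fun k => profileLaw (2 * k) phi (false, false)) atTop (𝓝 ((phi ^ 2 / 2) ^ 2)) := by
  have hφ := phi_pos
  refine tendsto_of_mapsTo_of_dist_le (f := fun y => (2 * phi * y + phi ^ 4) ^ 2)
    (s := Set.Icc 0 ((phi ^ 2 / 2) ^ 2)) (by norm_num) (by norm_num : (1 / 2 : ℝ) < 1) ?_ ?_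
    (by simp [profileLaw_zero_robust]; positivity) fun k => ?_
  · rintro y ⟨hy₀, hy₁⟩
    have hA : 2 * phi * y + phi ^ 4 ≤ phi ^ 2 / 2 := by nlinarith [phi_sq_div_two_fixed_point]
    exact ⟨by positivity, pow_le_pow_left₀ (by positivity) hA 2⟩
  · rintro y ⟨hy₀, hy₁⟩
    have hgap : 0 ≤ (phi ^ 2 / 2) ^ 2 - y := sub_nonneg.2 hy₁
    have key : (phi ^ 2 / 2) ^ 2 - (2 * phi * y + phi ^ 4) ^ 2 =
        2 * phi * ((phi ^ 2 / 2) ^ 2 - y) * (phi ^ 2 / 2 + (2 * phi * y + phi ^ 4)) := by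
      linear_combination (-(phi ^ 2 / 2 + (2 * phi * y + phi ^ 4))) * phi_sq_div_two_fixed_point
    have hA : 2 * phi * y + phi ^ 4 ≤ phi ^ 2 / 2 := by nlinarith [phi_sq_div_two_fixed_point]
    rw [Real.dist_eq, Real.dist_eq, abs_sub_comm, key, abs_sub_comm, abs_of_nonneg hgap,
      abs_of_nonneg (mul_nonneg (mul_nonneg (by positivity) hgap) (by positivity))]
    nlinarith [two_mul_phi_pow_three_le, mul_nonneg hφ.le hgap]
  · rw [show 2 * (k + 1) = 2 * k + 1 + 1 by ring,
      (profileLaw_robust_succ_of_odd_phi (by omega)).2,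
      (profileLaw_robust_succ_of_even_phi (by omega)).2]

lemma tendsto_fragProb_one_phi :
    Tendsto (fun n => fragProb n 1 phi) atTop (𝓝 (1 - phi ^ 2 / 2 - (phi ^ 2 / 2) ^ 2)) := by
  have hr := tendsto_profileLaw_two_mul_true_robust
  have hu := tendsto_profileLaw_two_mul_false_robust
  refine tendsto_of_tendsto_even_of_tendsto_odd ?_ ?_
  · simpa only [fragProb_one_eq] using (tendsto_const_nhds.sub hr).sub hu
  · have hodd : ∀ k, fragProb (2 * k + 1) 1 phi = 1 - profileLaw (2 * k) phi (true, false) ^ 2 -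
        (2 * phi * profileLaw (2 * k) phi (false, false) + phi ^ 4) := fun k => by
      obtain ⟨hr₁, hu₁⟩ := profileLaw_robust_succ_of_even_phi (n := 2 * k) (by omega)
      rw [fragProb_one_eq, hr₁, hu₁]
    simp only [hodd]
    convert (tendsto_const_nhds.sub (hr.pow 2)).sub
      ((hu.const_mul (2 * phi)).add_const (phi ^ 4)) using 2
    linear_combination phi_sq_div_two_fixed_point

/-- The asymptotic probability of 1-fragility of a golden game exists and equals
`1 − φ·ξ − φ²·ξ²`, where `ξ` is the unique root in `(0,1)` of `x = φ³ + 2φ²x²`. -/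
theorem asymptotic_one_fragility :
    ∃ ξ : ℝ, ξ ∈ Set.Ioo (0 : ℝ) 1 ∧ ξ = phi ^ 3 + 2 * phi ^ 2 * ξ ^ 2 ∧
      (∀ y ∈ Set.Ioo (0 : ℝ) 1, y = phi ^ 3 + 2 * phi ^ 2 * y ^ 2 → y = ξ) ∧
      Tendsto (fun n => fragProb n 1 phi) atTop (𝓝 (1 - phi * ξ - phi ^ 2 * ξ ^ 2)) := by
  refine ⟨phi / 2, ⟨by linarith [phi_pos], by linarith [phi_lt_one]⟩, phi_div_two_eq,
    fun y hy => eq_phi_div_two_of_lt_one hy.2, ?_⟩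
  convert tendsto_fragProb_one_phi using 2
  ring
end
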